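/- arXiv:2401.07561 — 4 statements merged into one kernel-verified Lean document; each statement's English description precedes it below -/
import Mathlib

section
/- Let Ω be a finite set, P a strictly positive probability mass function on Ω, X : Ω → ℝ^d, m ∈ ℝ^d, and λ' ∈ ℝ^d such that Q_{λ'}(ω) := e^{λ'·X(ω)} P(ω)/𝔼_P[e^{λ'·X}] satisfies 𝔼_{Q_{λ'}}[X] = m. Then for every probability mass function Q with 𝔼_Q[X] = m, D(Q‖P) ≥ D(Q_{λ'}‖P); i.e., the Esscher transform Q_{λ'} minimizes relative entropy to P among all distributions satisfying the moment constraints. -/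
open Finset

/-- The Esscher transform of `P` with parameter `lam` with respect to `X`. -/
noncomputable def esscher {Ω : Type*} [Fintype Ω] {d : ℕ}
    (P : Ω → ℝ) (X : Ω → Fin d → ℝ) (lam : Fin d → ℝ) (ω : Ω) : ℝ :=
  Real.exp (∑ i, lam i * X ω i) * P ω / ∑ ω', P ω' * Real.exp (∑ i, lam i * X ω' i)

/-- If the Esscher transform `Q_{λ'}` of `P` satisfies the moment constraints, then it
minimizes relative entropy to `P` among all pmfs satisfying the same constraints. -/
theorem esscher_minimizes_relEntropy
    {Ω : Type*} [Fintype Ω] {d : ℕ}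
    (P Q : Ω → ℝ) (X : Ω → Fin d → ℝ) (m lam' : Fin d → ℝ)
    (hP : ∀ ω, 0 < P ω) (hPsum : ∑ ω, P ω = 1)
    (hmE : ∀ i, ∑ ω, esscher P X lam' ω * X ω i = m i)
    (hQ : ∀ ω, 0 ≤ Q ω) (hQsum : ∑ ω, Q ω = 1)
    (hmQ : ∀ i, ∑ ω, Q ω * X ω i = m i) :
    ∑ ω, Q ω * Real.log (Q ω / P ω) ≥
      ∑ ω, esscher P X lam' ω * Real.log (esscher P X lam' ω / P ω) := by
  rcases isEmpty_or_nonempty Ω with hΩ | hΩ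
  · simp at hPsum
  set Z : ℝ := ∑ ω', P ω' * Real.exp (∑ i, lam' i * X ω' i) with hZdef
  have hZ : 0 < Z := Finset.sum_pos (fun ω _ => mul_pos (hP ω) (Real.exp_pos _))
    Finset.univ_nonempty
  set Q' : Ω → ℝ := esscher P X lam' with hQ'def
  have hQ'eq : ∀ ω, Q' ω = Real.exp (∑ i, lam' i * X ω i) * P ω / Z := fun ω => rfl
  have hQ'pos : ∀ ω, 0 < Q' ω := fun ω =>
    div_pos (mul_pos (Real.exp_pos _) (hP ω)) hZ
  have hQ'sum : ∑ ω, Q' ω = 1 := by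
    rw [show ∑ ω, Q' ω = (∑ ω, Real.exp (∑ i, lam' i * X ω i) * P ω) / Z by
      rw [Finset.sum_div]; exact Finset.sum_congr rfl fun ω _ => hQ'eq ω]
    rw [div_eq_one_iff_eq hZ.ne']
    exact Finset.sum_congr rfl fun ω _ => mul_comm _ _
  have hlog : ∀ ω, Real.log (Q' ω / P ω) = (∑ i, lam' i * X ω i) - Real.log Z := by
    intro ω
    have h1 : Q' ω / P ω = Real.exp (∑ i, lam' i * X ω i) / Z := by
      rw [hQ'eq ω, div_right_comm, mul_div_cancel_right₀ _ (hP ω).ne']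
    rw [h1, Real.log_div (Real.exp_pos _).ne' hZ.ne', Real.log_exp]
  have hsum : ∀ R : Ω → ℝ, (∑ ω, R ω = 1) → (∀ i, ∑ ω, R ω * X ω i = m i) →
      ∑ ω, R ω * Real.log (Q' ω / P ω) = (∑ i, lam' i * m i) - Real.log Z := by
    intro R hR1 hRm
    have : ∑ ω, R ω * Real.log (Q' ω / P ω)
        = ∑ ω, ((∑ i, lam' i * (R ω * X ω i)) - R ω * Real.log Z) := by
      refine Finset.sum_congr rfl fun ω _ => ?_
      rw [hlog ω, mul_sub, Finset.mul_sum]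
      congr 1
      exact Finset.sum_congr rfl fun i _ => by ring
    rw [this, Finset.sum_sub_distrib, Finset.sum_comm, ← Finset.sum_mul, hR1, one_mul]
    congr 1
    refine Finset.sum_congr rfl fun i _ => ?_
    rw [← Finset.mul_sum, hRm i]
  have hEQ' : ∑ ω, Q' ω * Real.log (Q' ω / P ω) = (∑ i, lam' i * m i) - Real.log Z :=
    hsum Q' hQ'sum hmE
  have hEQ : ∑ ω, Q ω * Real.log (Q' ω / P ω) = (∑ i, lam' i * m i) - Real.log Z :=
    hsum Q hQsum hmQ
  have hterm : ∀ ω, Q ω * Real.log (Q ω / P ω) - Q ω * Real.log (Q' ω / P ω)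
      ≥ Q ω - Q' ω := by
    intro ω
    rcases eq_or_lt_of_le (hQ ω) with h0 | h0
    · rw [← h0]; simp [(hQ'pos ω).le]
    · have hQP : Real.log (Q ω / P ω) - Real.log (Q' ω / P ω)
          = Real.log (Q ω / Q' ω) := by
        rw [Real.log_div h0.ne' (hP ω).ne', Real.log_div (hQ'pos ω).ne' (hP ω).ne',
          Real.log_div h0.ne' (hQ'pos ω).ne']
        ring
      have hle : Real.log (Q' ω / Q ω) ≤ Q' ω / Q ω - 1 :=
        Real.log_le_sub_one_of_pos (div_pos (hQ'pos ω) h0)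
      have hneg : Real.log (Q ω / Q' ω) = - Real.log (Q' ω / Q ω) := by
        rw [← Real.log_inv, inv_div]
      have hdiv : Q' ω / Q ω * Q ω = Q' ω := div_mul_cancel₀ _ h0.ne'
      nlinarith [mul_le_mul_of_nonneg_left hle h0.le, hQ'pos ω]
  have hge : ∑ ω, (Q ω * Real.log (Q ω / P ω) - Q ω * Real.log (Q' ω / P ω))
      ≥ ∑ ω, (Q ω - Q' ω) := Finset.sum_le_sum fun ω _ => hterm ω
  have h0 : ∑ ω, (Q ω - Q' ω) = 0 := by
    rw [Finset.sum_sub_distrib, hQsum, hQ'sum, sub_self]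
  rw [h0, Finset.sum_sub_distrib] at hge
  rw [hEQ']
  linarith [hEQ, hge]
end

section
/- Let ρ be a positive definite density operator and H_1,…,H_d Hermitian operators on a finite-dimensional Hilbert space, m ∈ ℝ^d, and suppose λ' ∈ ℝ^d is such that the quantum Esscher transform σ_{λ'} = e^{λ'·H+log ρ}/tr(e^{λ'·H+log ρ}) satisfies tr(σ_{λ'} H_i) = m_i for all i. Then for every density operator σ with tr(σ H_i) = m_i for all i, S(σ‖ρ) ≥ S(σ_{λ'}‖ρ). -/
open scoped ComplexOrder

/-- Matrix logarithm of a Hermitian matrix via spectral functional calculus. -/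
noncomputable def matLog {n : Type*} [Fintype n] [DecidableEq n]
    (A : Matrix n n ℂ) : Matrix n n ℂ :=
  if h : A.IsHermitian then h.cfc Real.log else 0

/-- Matrix exponential of a Hermitian matrix via spectral functional calculus. -/
noncomputable def matExp {n : Type*} [Fintype n] [DecidableEq n]
    (A : Matrix n n ℂ) : Matrix n n ℂ :=
  if h : A.IsHermitian then h.cfc Real.exp else 0

/-- Quantum relative entropy `S(σ‖ρ) = tr(σ(log σ − log ρ))` (real part of the trace). -/
noncomputable def qRelEnt {n : Type*} [Fintype n] [DecidableEq n]
    (σ ρ : Matrix n n ℂ) : ℝ :=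
  ((σ * (matLog σ - matLog ρ)).trace).re

/-!
Put `A = ∑ⱼ λ'ⱼ Hⱼ + log ρ`, `Z = tr e^A` and `τ = e^A / Z`. Then
`log τ - log ρ = ∑ⱼ λ'ⱼ Hⱼ - log Z`, so `tr(X (log τ - log ρ)) = ∑ⱼ λ'ⱼ mⱼ - log Z` for every
unit-trace `X` satisfying the constraints; applied to `X = σ` and `X = τ` this gives the
Pythagorean identity `S(σ‖ρ) = S(σ‖τ) + S(τ‖ρ)`. It remains to see `S(σ‖τ) ≥ 0` (Klein's inequality): in the
eigenbases `(uᵢ)` of `σ` and `(vⱼ)` of `τ`, `tr(f(σ) g(τ)) = ∑ᵢⱼ f(pᵢ) g(qⱼ) |⟨uᵢ, vⱼ⟩|²`, so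
`S(σ‖τ) - tr σ + tr τ = ∑ᵢⱼ |⟨uᵢ, vⱼ⟩|² (pᵢ log pᵢ - pᵢ log qⱼ - pᵢ + qⱼ)`, and every bracket is
nonnegative because `log x ≤ x - 1`.
-/

open Matrix

namespace Matrix.IsHermitian

variable {n 𝕜 : Type*} [Fintype n] [DecidableEq n] [RCLike 𝕜] {A B : Matrix n n 𝕜}

lemma trace_cfc (hA : A.IsHermitian) (f : ℝ → ℝ) :
    (cfc f A).trace = ∑ i, (f (hA.eigenvalues i) : 𝕜) := by
  rw [hA.cfc_eq, IsHermitian.cfc, Unitary.conjStarAlgAut_apply, trace_mul_cycle,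
    Unitary.coe_star_mul_self, one_mul, trace_diagonal]
  rfl

lemma re_trace_cfc_mul_cfc (hA : A.IsHermitian) (hB : B.IsHermitian) (f g : ℝ → ℝ) :
    RCLike.re (cfc f A * cfc g B).trace =
      ∑ i, ∑ j, f (hA.eigenvalues i) * g (hB.eigenvalues j) *
        ‖(star (hA.eigenvectorUnitary : Matrix n n 𝕜) * hB.eigenvectorUnitary) i j‖ ^ 2 := by
  set U : Matrix n n 𝕜 := ↑hA.eigenvectorUnitary
  set V : Matrix n n 𝕜 := ↑hB.eigenvectorUnitary
  set W := star U * V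
  set D : Matrix n n 𝕜 := diagonal (RCLike.ofReal ∘ f ∘ hA.eigenvalues)
  set E : Matrix n n 𝕜 := diagonal (RCLike.ofReal ∘ g ∘ hB.eigenvalues)
  have hprod : cfc f A * cfc g B = U * (D * W * E) * star V := by
    rw [hA.cfc_eq, hB.cfc_eq, IsHermitian.cfc, IsHermitian.cfc, Unitary.conjStarAlgAut_apply,
      Unitary.conjStarAlgAut_apply]
    simp only [W, mul_assoc]
    rfl
  have hcyc : (cfc f A * cfc g B).trace = (D * W * E * star W).trace := by
    rw [hprod, trace_mul_cycle, ← star_star U, ← star_mul, trace_mul_comm]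
  rw [hcyc, trace, map_sum]
  refine Finset.sum_congr rfl fun i _ => ?_
  rw [diag_apply, mul_apply, map_sum]
  refine Finset.sum_congr rfl fun j _ => ?_
  have hentry : (D * W * E) i j * star (W i j) =
      ((f (hA.eigenvalues i) * g (hB.eigenvalues j) * ‖W i j‖ ^ 2 : ℝ) : 𝕜) := by
    simp only [D, E, mul_diagonal, diagonal_mul, Function.comp_apply, RCLike.star_def]
    push_cast
    rw [← RCLike.mul_conj]
    ring
  rw [star_apply, hentry, RCLike.ofReal_re]

end Matrix.IsHermitian

lemma Real.sub_le_mul_log_sub_mul_log {a b : ℝ} (ha : 0 ≤ a) (hb : 0 < b) :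
    a - b ≤ a * Real.log a - a * Real.log b := by
  rcases ha.eq_or_lt with rfl | ha
  · simpa using hb.le
  · have h := Real.log_le_sub_one_of_pos (div_pos hb ha)
    rw [Real.log_div hb.ne' ha.ne'] at h
    have h' := mul_le_mul_of_nonneg_left h ha.le
    rw [mul_sub, mul_sub, mul_div_cancel₀ b ha.ne', mul_one] at h'
    linarith

section

open scoped MatrixOrder

variable {n : Type*} [Fintype n] [DecidableEq n] {A : Matrix n n ℂ}

lemma matLog_of_isHermitian (hA : A.IsHermitian) : matLog A = cfc Real.log A := by
  rw [matLog, dif_pos hA, hA.cfc_eq]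

lemma matExp_of_isHermitian (hA : A.IsHermitian) : matExp A = cfc Real.exp A := by
  rw [matExp, dif_pos hA, hA.cfc_eq]

lemma isHermitian_matLog (A : Matrix n n ℂ) : (matLog A).IsHermitian := by
  unfold matLog
  split_ifs with hA
  · exact hA.cfc_eq Real.log ▸ cfc_predicate Real.log A
  · exact isHermitian_zero

/-- Klein's inequality. -/
theorem re_trace_sub_le_qRelEnt {σ τ : Matrix n n ℂ} (hσ : σ.PosSemidef) (hτ : τ.PosDef) :
    (σ.trace - τ.trace).re ≤ qRelEnt σ τ := by
  have hσh := hσ.1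
  have hτh := hτ.1
  set p := hσh.eigenvalues
  set q := hτh.eigenvalues
  set c := fun i j =>
    ‖(star (hσh.eigenvectorUnitary : Matrix n n ℂ) * hτh.eigenvectorUnitary) i j‖ ^ 2
  have hcont (X : Matrix n n ℂ) (f : ℝ → ℝ) : ContinuousOn f (spectrum ℝ X) :=
    finite_real_spectrum.continuousOn f
  have hsplit : σ * (matLog σ - matLog τ) - (σ - τ) =
      cfc (fun x => x * Real.log x - x) σ * cfc (fun _ : ℝ => (1 : ℝ)) τ -
        cfc (fun x : ℝ => x) σ * cfc Real.log τ +
        cfc (fun _ : ℝ => (1 : ℝ)) σ * cfc (fun x : ℝ => x) τ := by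
    rw [matLog_of_isHermitian hσh, matLog_of_isHermitian hτh,
      cfc_sub _ _ σ (hcont _ _) (hcont _ _), cfc_mul _ _ σ (hcont _ _) (hcont _ _),
      cfc_const_one (R := ℝ) (a := σ), cfc_const_one (R := ℝ) (a := τ),
      cfc_id' (R := ℝ) (a := σ), cfc_id' (R := ℝ) (a := τ)]
    noncomm_ring
  have hsum : qRelEnt σ τ - (σ.trace - τ.trace).re =
      ∑ i, ∑ j, (p i * Real.log (p i) - p i - p i * Real.log (q j) + q j) * c i j := by
    have hre := hσh.re_trace_cfc_mul_cfc hτh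
    simp only [RCLike.re_to_complex] at hre
    rw [qRelEnt, ← Complex.sub_re, ← trace_sub, ← trace_sub, hsplit, trace_add, trace_sub,
      Complex.add_re, Complex.sub_re, hre, hre, hre, ← Finset.sum_sub_distrib,
      ← Finset.sum_add_distrib]
    refine Finset.sum_congr rfl fun i _ => ?_
    rw [← Finset.sum_sub_distrib, ← Finset.sum_add_distrib]
    refine Finset.sum_congr rfl fun j _ => ?_
    ring
  have hterm (i j) : 0 ≤ p i * Real.log (p i) - p i - p i * Real.log (q j) + q j := by
    linarith [Real.sub_le_mul_log_sub_mul_log (hσ.eigenvalues_nonneg i) (hτ.eigenvalues_pos j)]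
  have hnonneg : 0 ≤ ∑ i, ∑ j,
      (p i * Real.log (p i) - p i - p i * Real.log (q j) + q j) * c i j :=
    Finset.sum_nonneg fun i _ => Finset.sum_nonneg fun j _ => mul_nonneg (hterm i j) (sq_nonneg _)
  linarith

lemma qRelEnt_eq_qRelEnt_add_qRelEnt {σ τ ρ : Matrix n n ℂ}
    (h : (σ * (matLog τ - matLog ρ)).trace = (τ * (matLog τ - matLog ρ)).trace) :
    qRelEnt σ ρ = qRelEnt σ τ + qRelEnt τ ρ := by
  simp only [qRelEnt]
  rw [← Complex.add_re, ← h, ← trace_add, ← Matrix.mul_add, sub_add_sub_cancel]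

noncomputable def partitionFunction (A : Matrix n n ℂ) : ℝ := (matExp A).trace.re

noncomputable def gibbsState (A : Matrix n n ℂ) : Matrix n n ℂ :=
  (matExp A).trace⁻¹ • matExp A

lemma trace_matExp (hA : A.IsHermitian) :
    (matExp A).trace = ((∑ i, Real.exp (hA.eigenvalues i) : ℝ) : ℂ) := by
  rw [matExp_of_isHermitian hA, hA.trace_cfc, Complex.ofReal_sum]
  rfl

lemma trace_matExp_eq_partitionFunction (hA : A.IsHermitian) :
    (matExp A).trace = partitionFunction A := by
  rw [partitionFunction, trace_matExp hA, Complex.ofReal_re]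

lemma partitionFunction_pos [Nonempty n] (hA : A.IsHermitian) : 0 < partitionFunction A := by
  rw [partitionFunction, trace_matExp hA, Complex.ofReal_re]
  exact Finset.sum_pos (fun i _ => Real.exp_pos _) Finset.univ_nonempty

lemma gibbsState_eq_cfc (hA : A.IsHermitian) :
    gibbsState A = cfc (fun x => (partitionFunction A)⁻¹ * Real.exp x) A := by
  rw [gibbsState, trace_matExp_eq_partitionFunction hA, matExp_of_isHermitian hA,
    cfc_const_mul _ _ A (finite_real_spectrum.continuousOn _), ← Complex.ofReal_inv,
    ← Complex.coe_smul]

variable [Nonempty n]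

lemma gibbsState_posDef (hA : A.IsHermitian) : (gibbsState A).PosDef := by
  rw [← isStrictlyPositive_iff_posDef, gibbsState_eq_cfc hA,
    cfc_isStrictlyPositive_iff _ A (finite_real_spectrum.continuousOn _)]
  exact fun x _ => mul_pos (inv_pos.2 (partitionFunction_pos hA)) (Real.exp_pos x)

lemma trace_gibbsState (hA : A.IsHermitian) : (gibbsState A).trace = 1 := by
  rw [gibbsState, trace_smul, trace_matExp_eq_partitionFunction hA, smul_eq_mul,
    inv_mul_cancel₀ (Complex.ofReal_ne_zero.2 (partitionFunction_pos hA).ne')]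

lemma matLog_gibbsState (hA : A.IsHermitian) :
    matLog (gibbsState A) = A - Real.log (partitionFunction A) • 1 := by
  have hZ := partitionFunction_pos hA
  have hlog (x : ℝ) : Real.log ((partitionFunction A)⁻¹ * Real.exp x) =
      x + -Real.log (partitionFunction A) := by
    rw [Real.log_mul (inv_ne_zero hZ.ne') (Real.exp_ne_zero x), Real.log_inv, Real.log_exp]
    ring
  rw [matLog_of_isHermitian (gibbsState_posDef hA).1, gibbsState_eq_cfc hA,
    ← cfc_comp' _ _ A ((finite_real_spectrum.image _).continuousOn _)
      (finite_real_spectrum.continuousOn _)]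
  simp_rw [hlog]
  rw [cfc_add_const _ _ A (finite_real_spectrum.continuousOn _), cfc_id' (R := ℝ) (a := A),
    Algebra.algebraMap_eq_smul_one, neg_smul, ← sub_eq_add_neg]

end

theorem qEsscher_minimizes_qRelEnt_general
    {n : Type*} [Fintype n] [DecidableEq n] {d : ℕ}
    (ρ σ : Matrix n n ℂ) (H : Fin d → Matrix n n ℂ) (m lam' : Fin d → ℝ)
    (hH : ∀ i, (H i).IsHermitian)
    (hmE : ∀ i,
      (((matExp (∑ j, lam' j • H j + matLog ρ)).trace⁻¹ •
          matExp (∑ j, lam' j • H j + matLog ρ)) * H i).trace = (m i : ℂ))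
    (hσ : σ.PosSemidef) (hσtr : σ.trace = 1)
    (hm : ∀ i, (σ * H i).trace = (m i : ℂ)) :
    qRelEnt σ ρ ≥
      qRelEnt ((matExp (∑ j, lam' j • H j + matLog ρ)).trace⁻¹ •
        matExp (∑ j, lam' j • H j + matLog ρ)) ρ := by
  have : Nonempty n := by
    by_contra h
    simp [trace, not_nonempty_iff.1 h] at hσtr
  set A := ∑ j, lam' j • H j + matLog ρ
  have hS : (∑ j, lam' j • H j).IsHermitian :=
    isSelfAdjoint_sum _ fun j _ => (IsSelfAdjoint.all (lam' j)).smul (hH j).isSelfAdjoint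
  have hA : A.IsHermitian := hS.add (isHermitian_matLog ρ)
  change qRelEnt (gibbsState A) ρ ≤ qRelEnt σ ρ
  have hconstraint : ∀ X : Matrix n n ℂ, X.trace = 1 → (∀ i, (X * H i).trace = m i) →
      (X * (matLog (gibbsState A) - matLog ρ)).trace =
        ∑ j, lam' j * (m j : ℂ) - Real.log (partitionFunction A) := by
    intro X hX hXH
    rw [matLog_gibbsState hA, add_sub_right_comm, add_sub_cancel_right, Matrix.mul_sub,
      Matrix.mul_sum, trace_sub, trace_sum]
    simp [hX, hXH]
  rw [qRelEnt_eq_qRelEnt_add_qRelEnt (σ := σ) (τ := gibbsState A) (ρ := ρ)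
    (by rw [hconstraint σ hσtr hm, hconstraint _ (trace_gibbsState hA) hmE])]
  have hklein := re_trace_sub_le_qRelEnt hσ (gibbsState_posDef hA)
  rw [hσtr, trace_gibbsState hA, sub_self, Complex.zero_re] at hklein
  linarith

/-- The quantum Esscher transform minimizes quantum relative entropy to ρ among all
density operators satisfying the expectation constraints `tr(σ H_i) = m_i`. -/
theorem qEsscher_minimizes_qRelEnt
    {n : Type*} [Fintype n] [DecidableEq n] {d : ℕ}
    (ρ σ : Matrix n n ℂ) (H : Fin d → Matrix n n ℂ) (m lam' : Fin d → ℝ)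
    (hρ : ρ.PosDef) (hρtr : ρ.trace = 1)
    (hH : ∀ i, (H i).IsHermitian)
    (hmE : ∀ i,
      (((matExp (∑ j, lam' j • H j + matLog ρ)).trace⁻¹ •
          matExp (∑ j, lam' j • H j + matLog ρ)) * H i).trace = (m i : ℂ))
    (hσ : σ.PosSemidef) (hσtr : σ.trace = 1)
    (hm : ∀ i, (σ * H i).trace = (m i : ℂ)) :
    qRelEnt σ ρ ≥
      qRelEnt ((matExp (∑ j, lam' j • H j + matLog ρ)).trace⁻¹ •
        matExp (∑ j, lam' j • H j + matLog ρ)) ρ :=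
  qEsscher_minimizes_qRelEnt_general ρ σ H m lam' hH hmE hσ hσtr hm
end

section
/- Let ρ be an n-qubit density operator and O_ρ a unitary on n_ρ+n qubits with O_ρ|0^{n_ρ}⟩|0^n⟩ = |ρ⟩, a purification of ρ (tr over the first n_ρ qubits of |ρ⟩⟨ρ| equals ρ). Then W := (O_ρ† ⊗ I_n)(I_{n_ρ+n} ⊗ SWAP_n)(O_ρ ⊗ I_n) is a (1, n+n_ρ, 0)-block-encoding of ρ: (⟨0^{n_ρ+n}| ⊗ I_n) W (|0^{n_ρ+n}⟩ ⊗ I_n) = ρ. -/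
/-- The block of `W` picked out by an ancilla basis state `z`. -/
def blockOf {A N : Type*} [Fintype A] [Fintype N]
    (W : Matrix (A × N) (A × N) ℂ) (z : A) : Matrix N N ℂ :=
  Matrix.of fun i j => W (z, i) (z, j)

/-- Block-encoding of a density operator from purified access:
if `O_ρ |0^{n_ρ}⟩|0^n⟩ = |ρ⟩` purifies `ρ`, then
`W = (O_ρ† ⊗ I_n)(I_{n_ρ+n} ⊗ SWAP_n)(O_ρ ⊗ I_n)` is a `(1, n+n_ρ, 0)`-block-encoding
of `ρ`, i.e. `(⟨0^{n_ρ+n}| ⊗ I_n) W (|0^{n_ρ+n}⟩ ⊗ I_n) = ρ`. -/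
theorem purified_blockEncoding_density
    (nρ n : ℕ)
    (ρ : Matrix (Fin n → Fin 2) (Fin n → Fin 2) ℂ)
    (Oρ : Matrix ((Fin nρ → Fin 2) × (Fin n → Fin 2)) ((Fin nρ → Fin 2) × (Fin n → Fin 2)) ℂ)
    (hO : Oρ ∈ Matrix.unitaryGroup ((Fin nρ → Fin 2) × (Fin n → Fin 2)) ℂ)
    -- the purification: `ψ = O_ρ |0^{n_ρ}⟩|0^n⟩` has partial trace (over the ancilla) `ρ`
    (hpur : ∀ s s' : Fin n → Fin 2,
      (∑ r : Fin nρ → Fin 2,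
        Oρ (r, s) ((fun _ => 0), (fun _ => 0)) *
          (starRingEnd ℂ) (Oρ (r, s') ((fun _ => 0), (fun _ => 0)))) = ρ s s') :
    blockOf
      (Matrix.kronecker Oρ.conjTranspose (1 : Matrix (Fin n → Fin 2) (Fin n → Fin 2) ℂ) *
        -- `I_{n_ρ+n} ⊗ SWAP_n`, written entrywise
        (Matrix.of fun (p q : (((Fin nρ → Fin 2) × (Fin n → Fin 2)) × (Fin n → Fin 2))) =>
          if p.1.1 = q.1.1 ∧ p.1.2 = q.2 ∧ p.2 = q.1.2 then (1 : ℂ) else 0) *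
        Matrix.kronecker Oρ (1 : Matrix (Fin n → Fin 2) (Fin n → Fin 2) ℂ))
      ((fun _ => 0), (fun _ => 0)) = ρ := by
  ext i j
  rw [← hpur i j]
  simp only [blockOf, Matrix.mul_apply, Matrix.kroneckerMap_apply, Matrix.of_apply,
    Matrix.conjTranspose_apply, Fintype.sum_prod_type]
  simp [Matrix.one_apply, mul_ite, ite_and, Finset.sum_ite_eq, Finset.sum_ite_eq', mul_comm]
end

section
/- Let A_0,…,A_{m−1} be n-qubit operators with unitaries U_j that are (α_j, a, ε_BE)-block-encodings of A_j (α_j > 0), let A = ∑_j y_j A_j for y ∈ ℂ^m, and let (P_L, P_R) be a (β, b, ε_SP)-state-preparation-pair for the vector (α_0 y_0,…,α_{m−1} y_{m−1}). Then W̃ = (P_L† ⊗ I_a ⊗ I_n) W (P_R ⊗ I_a ⊗ I_n), with W = ∑_{j<m} |j⟩⟨j| ⊗ U_j + ∑_{j=m}^{2^b−1} |j⟩⟨j| ⊗ I_{a+n}, is a (β, a+b, (β/min_j α_j)·ε_BE + ε_SP)-block-encoding of A. -/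
/-- Spectral (ℓ²-operator) norm of a square complex matrix. -/
noncomputable def l2OpNorm {N : Type*} [Fintype N] [DecidableEq N]
    (M : Matrix N N ℂ) : ℝ :=
  ‖(Matrix.toEuclideanCLM (𝕜 := ℂ) M : EuclideanSpace ℂ N →L[ℂ] EuclideanSpace ℂ N)‖

/-- The select unitary `W = ∑_{j<m} |j⟩⟨j| ⊗ U_j + ∑_{m≤j<2^b} |j⟩⟨j| ⊗ I`. -/
def selectW {A N : Type*} [Fintype A] [DecidableEq A] [Fintype N] [DecidableEq N]
    (m b : ℕ) (U : Fin m → Matrix (A × N) (A × N) ℂ) :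
    Matrix ((Fin (2 ^ b) × A) × N) ((Fin (2 ^ b) × A) × N) ℂ :=
  Matrix.of fun p q =>
    if p.1.1 = q.1.1 then
      (if h : (p.1.1 : ℕ) < m then U ⟨p.1.1, h⟩ (p.1.2, p.2) (q.1.2, q.2)
       else if p.1.2 = q.1.2 ∧ p.2 = q.2 then 1 else 0)
    else 0

/-- `P ⊗ I_a ⊗ I_n` for a matrix `P` acting on the `b`-qubit register. -/
def kronIdRight {B A N : Type*} [Fintype B] [Fintype A] [DecidableEq A]
    [Fintype N] [DecidableEq N] (P : Matrix B B ℂ) :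
    Matrix ((B × A) × N) ((B × A) × N) ℂ :=
  Matrix.of fun p q =>
    P p.1.1 q.1.1 * (if p.1.2 = q.1.2 ∧ p.2 = q.2 then 1 else 0)

open scoped Matrix Matrix.Norms.L2Operator

theorem CStarRing.norm_one_le {E : Type*} [NormedRing E] [StarRing E] [CStarRing E] :
    ‖(1 : E)‖ ≤ 1 := by
  rcases subsingleton_or_nontrivial E with _ | _
  · simp [Subsingleton.elim (1 : E) 0]
  · exact CStarRing.norm_one.le

theorem CStarRing.norm_le_one_of_mem_unitary {E : Type*} [NormedRing E] [StarRing E] [CStarRing E]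
    {U : E} (hU : U ∈ unitary E) : ‖U‖ ≤ 1 :=
  calc ‖U‖ = ‖1 * U‖ := by rw [one_mul]
    _ = ‖(1 : E)‖ := CStarRing.norm_mul_mem_unitary 1 hU
    _ ≤ 1 := CStarRing.norm_one_le

namespace Matrix

variable {𝕜 : Type*} [RCLike 𝕜] {l m n o : Type*} [Fintype l] [Fintype m] [Fintype n] [Fintype o]
  [DecidableEq l] [DecidableEq m] [DecidableEq n] [DecidableEq o]

theorem l2_opNorm_one_submatrix_le {e : l → m} (he : Function.Injective e) :
    ‖(1 : Matrix m m 𝕜).submatrix e id‖ ≤ 1 := by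
  set P := (1 : Matrix m m 𝕜).submatrix e id
  have hPP : Pᴴᴴ * Pᴴ = 1 := by
    rw [conjTranspose_conjTranspose, conjTranspose_submatrix, conjTranspose_one]
    simpa [submatrix_one e he] using
      one_submatrix_mul e (Equiv.refl m) ((1 : Matrix m m 𝕜).submatrix id e)
  have h := l2_opNorm_conjTranspose_mul_self Pᴴ
  rw [hPP, l2_opNorm_conjTranspose] at h
  nlinarith [norm_nonneg P, CStarRing.norm_one_le (E := Matrix l l 𝕜)]

theorem l2_opNorm_submatrix_le (M : Matrix m n 𝕜) {e₁ : l → m} {e₂ : o → n}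
    (he₁ : Function.Injective e₁) (he₂ : Function.Injective e₂) :
    ‖M.submatrix e₁ e₂‖ ≤ ‖M‖ := by
  have hM : M.submatrix e₁ e₂ =
      (1 : Matrix m m 𝕜).submatrix e₁ id * M * ((1 : Matrix n n 𝕜).submatrix e₂ id)ᴴ := by
    rw [conjTranspose_submatrix, conjTranspose_one]
    have h₁ := one_submatrix_mul e₁ (Equiv.refl m) M
    have h₂ := mul_submatrix_one (Equiv.refl n) e₂ (M.submatrix e₁ id)
    simp only [Equiv.coe_refl, Equiv.refl_symm, Function.id_comp] at h₁ h₂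
    rw [h₁, h₂, submatrix_submatrix]
    rfl
  rw [hM]
  calc _ ≤ ‖(1 : Matrix m m 𝕜).submatrix e₁ id‖ * ‖M‖ *
        ‖((1 : Matrix n n 𝕜).submatrix e₂ id)ᴴ‖ :=
        (l2_opNorm_mul _ _).trans (by gcongr; exact l2_opNorm_mul _ _)
    _ ≤ 1 * ‖M‖ * 1 := by
        rw [l2_opNorm_conjTranspose]
        gcongr
        exacts [l2_opNorm_one_submatrix_le he₁, l2_opNorm_one_submatrix_le he₂]
    _ = ‖M‖ := by ring

end Matrix

theorem l2OpNorm_eq_l2_opNorm {N : Type*} [Fintype N] [DecidableEq N] (M : Matrix N N ℂ) :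
    l2OpNorm M = ‖M‖ :=
  rfl

/-- The select operator `∑_k |k⟩⟨k| ⊗ V k`. -/
def selectOp {B A N : Type*} [DecidableEq B] (V : B → Matrix (A × N) (A × N) ℂ) :
    Matrix ((B × A) × N) ((B × A) × N) ℂ :=
  Matrix.of fun p q => if p.1.1 = q.1.1 then V p.1.1 (p.1.2, p.2) (q.1.2, q.2) else 0

section Blocks

variable {B A N : Type*} [Fintype B] [Fintype A] [DecidableEq A] [Fintype N] [DecidableEq N]

theorem norm_blockOf_le (W : Matrix (A × N) (A × N) ℂ) (z : A) : ‖blockOf W z‖ ≤ ‖W‖ :=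
  W.l2_opNorm_submatrix_le (Prod.mk_right_injective z) (Prod.mk_right_injective z)

theorem kronIdRight_mul_apply (P : Matrix B B ℂ) (M : Matrix ((B × A) × N) ((B × A) × N) ℂ)
    (p q : (B × A) × N) :
    (kronIdRight P * M : Matrix ((B × A) × N) ((B × A) × N) ℂ) p q =
      ∑ k, P p.1.1 k * M ((k, p.1.2), p.2) q := by
  simp [Matrix.mul_apply, Fintype.sum_prod_type, kronIdRight, ite_and]

theorem mul_kronIdRight_apply (Q : Matrix B B ℂ) (M : Matrix ((B × A) × N) ((B × A) × N) ℂ)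
    (p q : (B × A) × N) :
    (M * kronIdRight Q : Matrix ((B × A) × N) ((B × A) × N) ℂ) p q =
      ∑ k, M p ((k, q.1.2), q.2) * Q k q.1.1 := by
  simp [Matrix.mul_apply, Fintype.sum_prod_type, kronIdRight, ite_and]

theorem blockOf_kronIdRight_mul_selectOp_mul [DecidableEq B] (P Q : Matrix B B ℂ)
    (V : B → Matrix (A × N) (A × N) ℂ) (k₀ : B) (z : A) :
    blockOf (kronIdRight Pᴴ * selectOp V * kronIdRight Q) (k₀, z) =
      ∑ k, (star (P k k₀) * Q k k₀) • blockOf (V k) z := by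
  ext i j
  simp only [blockOf, Matrix.of_apply, Matrix.sum_apply, Matrix.smul_apply, smul_eq_mul,
    mul_assoc, kronIdRight_mul_apply, mul_kronIdRight_apply]
  refine Finset.sum_congr rfl fun k _ => ?_
  rw [Finset.sum_eq_single k]
  · simp only [selectOp, Matrix.of_apply, Matrix.conjTranspose_apply, if_true]
    ring
  · intro l _ hl
    simp [selectOp, hl]
  · simp

theorem selectW_eq_selectOp (m b : ℕ) (U : Fin m → Matrix (A × N) (A × N) ℂ) :
    selectW m b U = selectOp fun k : Fin (2 ^ b) => if h : (k : ℕ) < m then U ⟨k, h⟩ else 1 := by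
  ext p q
  by_cases hk : (p.1.1 : ℕ) < m <;> simp [selectW, selectOp, hk, Matrix.one_apply, Prod.ext_iff]

theorem blockOf_kronIdRight_mul_selectW_mul {m b : ℕ} (hmb : m ≤ 2 ^ b)
    (U : Fin m → Matrix (A × N) (A × N) ℂ) (PL PR : Matrix (Fin (2 ^ b)) (Fin (2 ^ b)) ℂ)
    (hPLR : ∀ k : Fin (2 ^ b), m ≤ (k : ℕ) → star (PL k 0) * PR k 0 = 0) (z : A) :
    blockOf (kronIdRight PLᴴ * selectW m b U * kronIdRight PR) (0, z) =
      ∑ j : Fin m, (star (PL (Fin.castLE hmb j) 0) * PR (Fin.castLE hmb j) 0) •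
        blockOf (U j) z := by
  rw [selectW_eq_selectOp, blockOf_kronIdRight_mul_selectOp_mul]
  refine (Fintype.sum_of_injective (M := Matrix N N ℂ) _ (Fin.castLE_injective hmb) _ _
    (fun k hk => ?_) (fun j => ?_)).symm
  · rw [Fin.range_castLE, Set.mem_ofPred_eq, not_lt] at hk
    rw [hPLR k hk, zero_smul]
  · simp

end Blocks

section Estimate

variable {ι 𝕜 E : Type*} [Fintype ι] [Nonempty ι] [RCLike 𝕜]

theorem sum_norm_le_div_iInf {α : ι → ℝ} (hα : ∀ j, 0 < α j) {y : ι → 𝕜} {β : ℝ}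
    (hβ : ∑ j, ‖(α j : 𝕜) * y j‖ ≤ β) : ∑ j, ‖y j‖ ≤ β / ⨅ j, α j := by
  obtain ⟨j₀, hj₀⟩ := exists_eq_ciInf_of_finite (f := α)
  rw [le_div_iff₀ (hj₀ ▸ hα j₀), Finset.sum_mul]
  refine le_trans (Finset.sum_le_sum fun j _ => ?_) hβ
  rw [norm_mul, RCLike.norm_ofReal, abs_of_pos (hα j), mul_comm]
  exact mul_le_mul_of_nonneg_right (ciInf_le (Finite.bddBelow_range α) j) (norm_nonneg _)

variable [NormedAddCommGroup E] [NormedSpace 𝕜 E]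

theorem norm_sum_smul_sub_smul_sum_smul_le (a b : ι → E) {α : ι → ℝ} (hα : ∀ j, 0 < α j)
    (y c : ι → 𝕜) {ε β δ : ℝ} (hb : ∀ j, ‖b j‖ ≤ 1) (hab : ∀ j, ‖a j - (α j : 𝕜) • b j‖ ≤ ε)
    (hβ : ∑ j, ‖(α j : 𝕜) * y j‖ ≤ β) (hc : ∑ j, ‖(α j : 𝕜) * y j - β * c j‖ ≤ δ) :
    ‖∑ j, y j • a j - (β : 𝕜) • ∑ j, c j • b j‖ ≤ β / (⨅ j, α j) * ε + δ := by
  have hε : 0 ≤ ε := (norm_nonneg _).trans (hab (Classical.arbitrary ι))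
  have hsplit : ∑ j, y j • a j - (β : 𝕜) • ∑ j, c j • b j =
      ∑ j, (y j • (a j - (α j : 𝕜) • b j) + ((α j : 𝕜) * y j - β * c j) • b j) := by
    simp only [Finset.smul_sum, ← Finset.sum_sub_distrib, smul_sub, sub_smul, smul_smul]
    refine Finset.sum_congr rfl fun j _ => ?_
    rw [mul_comm (y j)]
    abel
  calc ‖∑ j, y j • a j - (β : 𝕜) • ∑ j, c j • b j‖
      ≤ ∑ j, (‖y j‖ * ε + ‖(α j : 𝕜) * y j - β * c j‖) := by
        rw [hsplit]
        refine (norm_sum_le _ _).trans (Finset.sum_le_sum fun j _ => (norm_add_le _ _).trans ?_)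
        rw [norm_smul, norm_smul]
        gcongr
        · exact hab j
        · exact mul_le_of_le_one_right (norm_nonneg _) (hb j)
    _ = (∑ j, ‖y j‖) * ε + ∑ j, ‖(α j : 𝕜) * y j - β * c j‖ := by
        rw [Finset.sum_add_distrib, Finset.sum_mul]
    _ ≤ β / (⨅ j, α j) * ε + δ := by
        gcongr
        exact sum_norm_le_div_iInf hα hβ

end Estimate

theorem blockEncoding_linear_combination_general
    {A N : Type*} [Fintype A] [DecidableEq A] [Fintype N] [DecidableEq N]
    (z : A) (m b : ℕ) (hm : 0 < m) (hmb : m ≤ 2 ^ b)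
    (Amat : Fin m → Matrix N N ℂ) (U : Fin m → Matrix (A × N) (A × N) ℂ)
    (hU : ∀ j, U j ∈ Matrix.unitaryGroup (A × N) ℂ)
    (α : Fin m → ℝ) (hα : ∀ j, 0 < α j) (εBE : ℝ)
    (hBE : ∀ j, l2OpNorm (Amat j - α j • blockOf (U j) z) ≤ εBE)
    (y : Fin m → ℂ) (β εSP : ℝ)
    (PL PR : Matrix (Fin (2 ^ b)) (Fin (2 ^ b)) ℂ)
    (hnorm1 : ∑ j : Fin m, ‖((α j : ℂ) * y j)‖ ≤ β)
    (hSP : ∑ j : Fin m, ‖((α j : ℂ) * y j -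
      (β : ℂ) * (starRingEnd ℂ) (PL (Fin.castLE hmb j) 0) * PR (Fin.castLE hmb j) 0)‖ ≤ εSP)
    (hSP0 : ∀ j : Fin (2 ^ b), m ≤ (j : ℕ) →
      (starRingEnd ℂ) (PL j 0) * PR j 0 = 0) :
    l2OpNorm ((∑ j, y j • Amat j) -
        β • blockOf (kronIdRight PL.conjTranspose * selectW m b U * kronIdRight PR)
          ((0 : Fin (2 ^ b)), z)) ≤ (β / ⨅ j, α j) * εBE + εSP := by
  have : Nonempty (Fin m) := ⟨⟨0, hm⟩⟩
  rw [l2OpNorm_eq_l2_opNorm, blockOf_kronIdRight_mul_selectW_mul hmb U PL PR hSP0,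
    ← Complex.coe_smul]
  refine norm_sum_smul_sub_smul_sum_smul_le Amat _ hα y _
    (fun j => (norm_blockOf_le _ z).trans (CStarRing.norm_le_one_of_mem_unitary (hU j)))
    (fun j => ?_) hnorm1 (by simp_rw [← mul_assoc]; exact hSP)
  have h := hBE j
  rw [l2OpNorm_eq_l2_opNorm, ← Complex.coe_smul] at h
  exact h

/-- Generalized linear combination of block-encoded matrices: given `(α_j,a,ε_BE)`-block-
encodings `U_j` of `A_j` and a `(β,b,ε_SP)`-state-preparation-pair `(P_L,P_R)` for `α ⊙ y`,
the matrix `W̃ = (P_L† ⊗ I)(∑_j |j⟩⟨j| ⊗ U_j + ∑_{j≥m} |j⟩⟨j| ⊗ I)(P_R ⊗ I)` is a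
`(β, a+b, (β/min_j α_j) ε_BE + ε_SP)`-block-encoding of `A = ∑_j y_j A_j`. -/
theorem blockEncoding_linear_combination
    {A N : Type*} [Fintype A] [DecidableEq A] [Fintype N] [DecidableEq N]
    (z : A) (m b : ℕ) (hm : 0 < m) (hmb : m ≤ 2 ^ b)
    (Amat : Fin m → Matrix N N ℂ) (U : Fin m → Matrix (A × N) (A × N) ℂ)
    (hU : ∀ j, U j ∈ Matrix.unitaryGroup (A × N) ℂ)
    (α : Fin m → ℝ) (hα : ∀ j, 0 < α j) (εBE : ℝ)
    (hBE : ∀ j, l2OpNorm (Amat j - α j • blockOf (U j) z) ≤ εBE)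
    (y : Fin m → ℂ) (β εSP : ℝ)
    (PL PR : Matrix (Fin (2 ^ b)) (Fin (2 ^ b)) ℂ)
    (hPL : PL ∈ Matrix.unitaryGroup (Fin (2 ^ b)) ℂ)
    (hPR : PR ∈ Matrix.unitaryGroup (Fin (2 ^ b)) ℂ)
    (hnorm1 : ∑ j : Fin m, ‖((α j : ℂ) * y j)‖ ≤ β)
    (hSP : ∑ j : Fin m, ‖((α j : ℂ) * y j -
      (β : ℂ) * (starRingEnd ℂ) (PL (Fin.castLE hmb j) 0) * PR (Fin.castLE hmb j) 0)‖ ≤ εSP)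
    (hSP0 : ∀ j : Fin (2 ^ b), m ≤ (j : ℕ) →
      (starRingEnd ℂ) (PL j 0) * PR j 0 = 0) :
    l2OpNorm ((∑ j, y j • Amat j) -
        β • blockOf (kronIdRight PL.conjTranspose * selectW m b U * kronIdRight PR)
          ((0 : Fin (2 ^ b)), z)) ≤ (β / ⨅ j, α j) * εBE + εSP :=
  blockEncoding_linear_combination_general z m b hm hmb Amat U hU α hα εBE hBE y β εSP PL PR hnorm1
    hSP hSP0
end
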